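/- Let P be a finite poset. In the polynomial ring K[x_p : p ∈ P][t] over a field K, define ψ(I) = t · ∏_{p ∈ max(I)} x_p for each poset ideal I. Then for all poset ideals I and J, ψ(I)·ψ(J) = ψ(I ∪ J)·ψ(I*J), where I*J is the poset ideal generated by max(I ∩ J) ∩ (max(I) ∪ max(J)). -/

import Mathlib

/-!
Since `ψ(I) = t · ∏_{p ∈ max I} x_p`, both sides are `t²` times a monomial, and the monomials
agree as soon as the multisets `max I + max J` and `max (I ∪ J) + max (I*J)` agree, i.e. as soon
as the two pairs of sets have the same union and the same intersection. Here
`max (I*J) = (max I ∩ J) ∪ (max J ∩ I)`. A maximal element of `I` lying outside the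
down-set `J` stays maximal in `I ∪ J`, which gives the unions; an element maximal in `I ∪ J`
and in `I*J` is maximal in both `I` and `J`, which gives the intersections.
-/

variable {P : Type*} [Fintype P] [PartialOrder P]

/-- The set of maximal elements of a subset `Z` of a poset. -/
def maxSet (Z : Set P) : Set P := {x | x ∈ Z ∧ ∀ y ∈ Z, x ≤ y → x = y}

/-- The poset ideal (down-set) generated by a subset `Y`. -/
def downClosure (Y : Set P) : Set P := {x | ∃ y ∈ Y, x ≤ y}

/-- The poset ideal `I*J` generated by `max(I ∩ J) ∩ (max(I) ∪ max(J))`. -/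
def idealStar (I J : Set P) : Set P :=
  downClosure (maxSet (I ∩ J) ∩ (maxSet I ∪ maxSet J))

/-- `ψ(I) = t · ∏_{p ∈ max(I)} x_p` in the polynomial ring `K[x_p : p ∈ P][t]`. -/
noncomputable def psi (K : Type*) [Field K] (I : Set P) :
    Polynomial (MvPolynomial P K) :=
  Polynomial.X *
    Polynomial.C (∏ p ∈ (Set.toFinite (maxSet I)).toFinset, MvPolynomial.X p)

theorem Finset.prod_mul_prod_eq_of_union_eq_of_inter_eq {ι M : Type*} [CommMonoid M]
    [DecidableEq ι] (f : ι → M) {A B C D : Finset ι} (hunion : A ∪ B = C ∪ D)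
    (hinter : A ∩ B = C ∩ D) :
    (∏ i ∈ A, f i) * ∏ i ∈ B, f i = (∏ i ∈ C, f i) * ∏ i ∈ D, f i := by
  rw [← Finset.prod_union_inter, hunion, hinter, Finset.prod_union_inter]

section maxSet

variable {α : Type*} [PartialOrder α] {Z W I J : Set α} {x : α}

theorem mem_maxSet_of_subset (hZW : Z ⊆ W) (hx : x ∈ maxSet W) (hxZ : x ∈ Z) :
    x ∈ maxSet Z :=
  ⟨hxZ, fun y hy => hx.2 y (hZW hy)⟩

theorem maxSet_union_subset : maxSet (I ∪ J) ⊆ maxSet I ∪ maxSet J := by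
  rintro x hx
  rcases hx.1 with hxI | hxJ
  · exact Or.inl (mem_maxSet_of_subset Set.subset_union_left hx hxI)
  · exact Or.inr (mem_maxSet_of_subset Set.subset_union_right hx hxJ)

theorem maxSet_inter_maxSet_subset : maxSet I ∩ maxSet J ⊆ maxSet (I ∪ J) := by
  rintro x ⟨hxI, hxJ⟩
  refine ⟨Or.inl hxI.1, ?_⟩
  rintro y (hy | hy)
  exacts [hxI.2 y hy, hxJ.2 y hy]

theorem mem_maxSet_union_of_notMem (hJ : IsLowerSet J) (hx : x ∈ maxSet I) (hxJ : x ∉ J) :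
    x ∈ maxSet (I ∪ J) := by
  refine ⟨Or.inl hx.1, ?_⟩
  rintro y (hy | hy) hxy
  · exact hx.2 y hy hxy
  · exact absurd (hJ hxy hy) hxJ

theorem maxSet_downClosure_of_isAntichain {S : Set α} (hS : IsAntichain (· ≤ ·) S) :
    maxSet (downClosure S) = S := by
  ext x
  constructor
  · rintro ⟨⟨y, hy, hxy⟩, hmax⟩
    rwa [hmax y ⟨y, hy, le_rfl⟩ hxy]
  · intro hx
    refine ⟨⟨x, hx, le_rfl⟩, ?_⟩
    rintro y ⟨s, hs, hys⟩ hxy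
    have hxs : x = s := hS.eq hx hs (hxy.trans hys)
    exact le_antisymm hxy (hxs ▸ hys)

theorem maxSet_idealStar (I J : Set α) :
    maxSet (idealStar I J) = (maxSet I ∩ J) ∪ (maxSet J ∩ I) := by
  have hanti : IsAntichain (· ≤ ·) (maxSet (I ∩ J) ∩ (maxSet I ∪ maxSet J)) :=
    fun x hx y hy hne hxy => hne (hx.1.2 y hy.1.1 hxy)
  rw [idealStar, maxSet_downClosure_of_isAntichain hanti]
  ext x
  constructor
  · rintro ⟨⟨⟨hxI, hxJ⟩, _⟩, hx | hx⟩
    exacts [Or.inl ⟨hx, hxJ⟩, Or.inr ⟨hx, hxI⟩]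
  · rintro (⟨hx, hxJ⟩ | ⟨hx, hxI⟩)
    · exact ⟨mem_maxSet_of_subset Set.inter_subset_left hx ⟨hx.1, hxJ⟩, Or.inl hx⟩
    · exact ⟨mem_maxSet_of_subset Set.inter_subset_right hx ⟨hxI, hx.1⟩, Or.inr hx⟩

theorem maxSet_union_union_maxSet_idealStar (hI : IsLowerSet I) (hJ : IsLowerSet J) :
    maxSet (I ∪ J) ∪ maxSet (idealStar I J) = maxSet I ∪ maxSet J := by
  rw [maxSet_idealStar]
  apply subset_antisymm
  · rintro x (hx | ⟨hx, _⟩ | ⟨hx, _⟩)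
    exacts [maxSet_union_subset hx, Or.inl hx, Or.inr hx]
  rintro x (hx | hx)
  · by_cases hxJ : x ∈ J
    exacts [Or.inr (Or.inl ⟨hx, hxJ⟩), Or.inl (mem_maxSet_union_of_notMem hJ hx hxJ)]
  · by_cases hxI : x ∈ I
    · exact Or.inr (Or.inr ⟨hx, hxI⟩)
    · exact Or.inl (Set.union_comm J I ▸ mem_maxSet_union_of_notMem hI hx hxI)

theorem maxSet_union_inter_maxSet_idealStar (I J : Set α) :
    maxSet (I ∪ J) ∩ maxSet (idealStar I J) = maxSet I ∩ maxSet J := by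
  rw [maxSet_idealStar]
  refine subset_antisymm ?_ fun x hx => ⟨maxSet_inter_maxSet_subset hx, Or.inl ⟨hx.1, hx.2.1⟩⟩
  rintro x ⟨hx, ⟨hxI, hxJ⟩ | ⟨hxJ, hxI⟩⟩
  · exact ⟨hxI, mem_maxSet_of_subset Set.subset_union_right hx hxJ⟩
  · exact ⟨mem_maxSet_of_subset Set.subset_union_left hx hxI, hxJ⟩

end maxSet

theorem psi_mul_psi_eq_of_maxSet (K : Type*) [Field K] {A B C D : Set P}
    (hunion : maxSet A ∪ maxSet B = maxSet C ∪ maxSet D)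
    (hinter : maxSet A ∩ maxSet B = maxSet C ∩ maxSet D) :
    psi K A * psi K B = psi K C * psi K D := by
  classical
  have hprod := Finset.prod_mul_prod_eq_of_union_eq_of_inter_eq
    (MvPolynomial.X : P → MvPolynomial P K)
    (A := (Set.toFinite (maxSet A)).toFinset) (B := (Set.toFinite (maxSet B)).toFinset)
    (C := (Set.toFinite (maxSet C)).toFinset) (D := (Set.toFinite (maxSet D)).toFinset)
    (by simpa only [← Finset.coe_inj, Finset.coe_union, Set.Finite.coe_toFinset])
    (by simpa only [← Finset.coe_inj, Finset.coe_inter, Set.Finite.coe_toFinset])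
  simp only [psi]
  rw [mul_mul_mul_comm, ← Polynomial.C_mul, hprod, Polynomial.C_mul, mul_mul_mul_comm]

/-- The straightening relation `ψ(I)ψ(J) = ψ(I ∪ J)ψ(I*J)` for poset ideals `I`, `J`. -/
theorem psi_straightening (K : Type*) [Field K] (I J : Set P)
    (hI : IsLowerSet I) (hJ : IsLowerSet J) :
    psi K I * psi K J = psi K (I ∪ J) * psi K (idealStar I J) :=
  psi_mul_psi_eq_of_maxSet K (maxSet_union_union_maxSet_idealStar hI hJ).symm
    (maxSet_union_inter_maxSet_idealStar I J).symm
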